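/- Let 𝒲, 𝒳, 𝒴 be finite sets, let π be a pmf on 𝒳 × 𝒴, let P_W be a pmf on 𝒲, and for each w ∈ 𝒲 let P_{X|W=w} be a pmf on 𝒳 and P_{Y|W=w} a pmf on 𝒴. Then for every coupling Q ∈ C(P_W, P_W), Σ_{(w,w')} Q(w,w')·𝓗(P_{X|W=w}, P_{Y|W=w'} ‖ π) ≥ Σ_w P_W(w)·H(P_{X|W=w}) + Σ_w P_W(w)·H(P_{Y|W=w}), where the left-hand sum is taken in the extended reals. (In particular, the quantity Γ := −Σ_w P_W(w)[H(P_{X|W=w}) + H(P_{Y|W=w})] + min_{Q ∈ C(P_W,P_W)} Σ_{(w,w')} Q(w,w')·𝓗(P_{X|W=w}, P_{Y|W=w'} ‖ π) is nonnegative.) -/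

import Mathlib

/-
Each product coupling `P_{X|W=w} ⊗ P_{Y|W=w'}` is admissible in the maximum defining
`𝓗(P_{X|W=w}, P_{Y|W=w'} ‖ π)`, and by Gibbs' inequality its cross-entropy against `π` is at least
its own entropy `H(P_{X|W=w}) + H(P_{Y|W=w'})`. Averaging over `Q` and using that both marginals
of `Q` are `P_W` gives the bound.
-/

open scoped BigOperators

/-- `log(1/t)` with values in the extended reals: `+∞` when `t = 0`. -/
noncomputable def negLogE (t : ℝ) : EReal :=
  if t = 0 then (⊤ : EReal) else ((Real.log t⁻¹ : ℝ) : EReal)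

/-- `Q` is a coupling of the pmfs `PX` and `PY`. -/
def IsCoupling {X Y : Type*} [Fintype X] [Fintype Y]
    (PX : X → ℝ) (PY : Y → ℝ) (Q : X × Y → ℝ) : Prop :=
  (∀ p, 0 ≤ Q p) ∧ (∀ x, ∑ y, Q (x, y) = PX x) ∧ (∀ y, ∑ x, Q (x, y) = PY y)

/-- The maximal cross-entropy `𝓗(PX, PY ‖ π)`, with values in the extended reals. -/
noncomputable def maxCrossEnt {X Y : Type*} [Fintype X] [Fintype Y]
    (PX : X → ℝ) (PY : Y → ℝ) (π : X × Y → ℝ) : EReal :=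
  sSup {s : EReal | ∃ Q, IsCoupling PX PY Q ∧
    s = ∑ p : X × Y, (Q p : EReal) * negLogE (π p)}

/-- Shannon entropy `H(P) = ∑ P(x) log(1/P(x))` (with `0 · log (1/0) = 0`). -/
noncomputable def entropy {X : Type*} [Fintype X] (P : X → ℝ) : ℝ :=
  ∑ x, P x * Real.log (P x)⁻¹

open Finset

lemma EReal.coe_finset_sum {ι : Type*} (s : Finset ι) (f : ι → ℝ) :
    ((∑ i ∈ s, f i : ℝ) : EReal) = ∑ i ∈ s, (f i : EReal) :=
  map_sum (⟨⟨(↑), EReal.coe_zero⟩, EReal.coe_add⟩ : ℝ →+ EReal) f s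

lemma mul_log_inv_eq_negMulLog (x : ℝ) : x * Real.log x⁻¹ = Real.negMulLog x := by
  rw [Real.log_inv, Real.negMulLog]
  ring

lemma entropy_eq_sum_negMulLog {X : Type*} [Fintype X] (P : X → ℝ) :
    entropy P = ∑ x, Real.negMulLog (P x) := by
  simp only [entropy, mul_log_inv_eq_negMulLog]

lemma negLogE_of_ne_zero {t : ℝ} (ht : t ≠ 0) : negLogE t = ((Real.log t⁻¹ : ℝ) : EReal) :=
  if_neg ht

lemma negLogE_nonneg {t : ℝ} (ht0 : 0 ≤ t) (ht1 : t ≤ 1) : 0 ≤ negLogE t := by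
  unfold negLogE
  split_ifs
  · exact le_top
  · rw [Real.log_inv]
    exact EReal.coe_nonneg.2 (neg_nonneg.2 (Real.log_nonpos ht0 ht1))

section Gibbs

variable {Z : Type*} [Fintype Z] {R p : Z → ℝ}

lemma mul_log_inv_sub_mul_log_inv_le {r t : ℝ} (hr : 0 ≤ r) (ht : 0 ≤ t) (hrt : r ≠ 0 → t ≠ 0) :
    r * Real.log r⁻¹ - r * Real.log t⁻¹ ≤ t - r := by
  rcases hr.eq_or_lt with rfl | hr
  · simpa using ht
  have ht : 0 < t := ht.lt_of_ne (hrt hr.ne').symm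
  calc r * Real.log r⁻¹ - r * Real.log t⁻¹ = r * Real.log (t / r) := by
        rw [Real.log_inv, Real.log_inv, Real.log_div ht.ne' hr.ne']
        ring
    _ ≤ r * (t / r - 1) :=
        mul_le_mul_of_nonneg_left (Real.log_le_sub_one_of_pos (by positivity)) hr.le
    _ = t - r := by field_simp

theorem entropy_le_sum_mul_log_inv (hR0 : ∀ z, 0 ≤ R z) (hp0 : ∀ z, 0 ≤ p z)
    (hsum : ∑ z, p z ≤ ∑ z, R z) (hRp : ∀ z, R z ≠ 0 → p z ≠ 0) :
    entropy R ≤ ∑ z, R z * Real.log (p z)⁻¹ := by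
  have h := sum_le_sum fun z (_ : z ∈ univ) =>
    mul_log_inv_sub_mul_log_inv_le (hR0 z) (hp0 z) (hRp z)
  rw [sum_sub_distrib, sum_sub_distrib] at h
  unfold entropy
  linarith

lemma sum_mul_negLogE_eq_coe (hRp : ∀ z, R z ≠ 0 → p z ≠ 0) :
    ∑ z, (R z : EReal) * negLogE (p z) = ((∑ z, R z * Real.log (p z)⁻¹ : ℝ) : EReal) := by
  rw [EReal.coe_finset_sum]
  refine sum_congr rfl fun z _ => ?_
  by_cases hz : R z = 0
  · simp [hz]
  · rw [negLogE_of_ne_zero (hRp z hz), EReal.coe_mul]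

lemma sum_mul_negLogE_eq_top (hR0 : ∀ z, 0 ≤ R z) (hp0 : ∀ z, 0 ≤ p z) (hp1 : ∑ z, p z ≤ 1)
    {z₀ : Z} (hRz₀ : R z₀ ≠ 0) (hpz₀ : p z₀ = 0) :
    ∑ z, (R z : EReal) * negLogE (p z) = ⊤ := by
  have hterm : (R z₀ : EReal) * negLogE (p z₀) = ⊤ := by
    rw [negLogE, if_pos hpz₀, EReal.coe_mul_top_of_pos ((hR0 z₀).lt_of_ne' hRz₀)]
  refine top_le_iff.1 (hterm ▸ single_le_sum (f := fun z => (R z : EReal) * negLogE (p z))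
    (fun z _ => ?_) (mem_univ z₀))
  have hp : p z ≤ 1 := (single_le_sum (fun z _ => hp0 z) (mem_univ z)).trans hp1
  exact mul_nonneg (EReal.coe_nonneg.2 (hR0 z)) (negLogE_nonneg (hp0 z) hp)

theorem entropy_le_sum_mul_negLogE (hR0 : ∀ z, 0 ≤ R z) (hR1 : ∑ z, R z = 1)
    (hp0 : ∀ z, 0 ≤ p z) (hp1 : ∑ z, p z ≤ 1) :
    (entropy R : EReal) ≤ ∑ z, (R z : EReal) * negLogE (p z) := by
  by_cases hRp : ∀ z, R z ≠ 0 → p z ≠ 0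
  · rw [sum_mul_negLogE_eq_coe hRp, EReal.coe_le_coe_iff]
    exact entropy_le_sum_mul_log_inv hR0 hp0 (hR1 ▸ hp1) hRp
  · obtain ⟨z₀, hRz₀, hpz₀⟩ : ∃ z, R z ≠ 0 ∧ p z = 0 := by simpa using hRp
    rw [sum_mul_negLogE_eq_top hR0 hp0 hp1 hRz₀ hpz₀]
    exact le_top

end Gibbs

section Couplings

variable {X Y : Type*} [Fintype X] [Fintype Y]

lemma entropy_mul {a : X → ℝ} {b : Y → ℝ} (ha1 : ∑ x, a x = 1) (hb1 : ∑ y, b y = 1) :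
    entropy (fun q : X × Y => a q.1 * b q.2) = entropy a + entropy b := by
  simp only [entropy_eq_sum_negMulLog, Real.negMulLog_mul, Fintype.sum_prod_type, sum_add_distrib,
    ← sum_mul, ← mul_sum, ha1, hb1, one_mul]

lemma isCoupling_mul {a : X → ℝ} {b : Y → ℝ} (ha0 : ∀ x, 0 ≤ a x) (ha1 : ∑ x, a x = 1)
    (hb0 : ∀ y, 0 ≤ b y) (hb1 : ∑ y, b y = 1) :
    IsCoupling a b (fun q => a q.1 * b q.2) :=
  ⟨fun q => mul_nonneg (ha0 q.1) (hb0 q.2), fun x => by simp only [← mul_sum, hb1, mul_one],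
    fun y => by simp only [← sum_mul, ha1, one_mul]⟩

lemma IsCoupling.sum_mul_add {PX : X → ℝ} {PY : Y → ℝ} {Q : X × Y → ℝ}
    (hQ : IsCoupling PX PY Q) (f : X → ℝ) (g : Y → ℝ) :
    ∑ q, Q q * (f q.1 + g q.2) = ∑ x, PX x * f x + ∑ y, PY y * g y := by
  simp only [mul_add, sum_add_distrib]
  rw [Fintype.sum_prod_type, Fintype.sum_prod_type_right]
  simp only [← sum_mul, hQ.2.1, hQ.2.2]

lemma IsCoupling.sum_mul_negLogE_le_maxCrossEnt {PX : X → ℝ} {PY : Y → ℝ} {Q : X × Y → ℝ}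
    (hQ : IsCoupling PX PY Q) (π : X × Y → ℝ) :
    ∑ q, (Q q : EReal) * negLogE (π q) ≤ maxCrossEnt PX PY π :=
  le_sSup ⟨Q, hQ, rfl⟩

theorem entropy_add_entropy_le_maxCrossEnt {π : X × Y → ℝ} (hπ0 : ∀ q, 0 ≤ π q)
    (hπ1 : ∑ q, π q ≤ 1) {a : X → ℝ} (ha0 : ∀ x, 0 ≤ a x) (ha1 : ∑ x, a x = 1)
    {b : Y → ℝ} (hb0 : ∀ y, 0 ≤ b y) (hb1 : ∑ y, b y = 1) :
    ((entropy a + entropy b : ℝ) : EReal) ≤ maxCrossEnt a b π := by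
  have hab := isCoupling_mul ha0 ha1 hb0 hb1
  have hab1 : ∑ q : X × Y, a q.1 * b q.2 = 1 := by
    simp only [Fintype.sum_prod_type, ← mul_sum, hb1, mul_one, ha1]
  rw [← entropy_mul ha1 hb1]
  exact (entropy_le_sum_mul_negLogE hab.1 hab1 hπ0 hπ1).trans
    (hab.sum_mul_negLogE_le_maxCrossEnt π)

end Couplings

theorem stmt_9_general {W X Y : Type*} [Fintype W] [Fintype X] [Fintype Y]
    (π : X × Y → ℝ) (hπ0 : ∀ p, 0 ≤ π p) (hπ1 : ∑ p, π p = 1)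
    (PW : W → ℝ)
    (PX : W → X → ℝ) (hPX0 : ∀ w x, 0 ≤ PX w x) (hPX1 : ∀ w, ∑ x, PX w x = 1)
    (PY : W → Y → ℝ) (hPY0 : ∀ w y, 0 ≤ PY w y) (hPY1 : ∀ w, ∑ y, PY w y = 1)
    (Q : W × W → ℝ) (hQ : IsCoupling PW PW Q) :
    ((∑ w, PW w * entropy (PX w) + ∑ w, PW w * entropy (PY w) : ℝ) : EReal)
      ≤ ∑ q : W × W, (Q q : EReal) * maxCrossEnt (PX q.1) (PY q.2) π := by
  rw [← hQ.sum_mul_add (fun w => entropy (PX w)) (fun w => entropy (PY w)),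
    EReal.coe_finset_sum]
  refine sum_le_sum fun q _ => ?_
  rw [EReal.coe_mul]
  exact mul_le_mul_of_nonneg_left
    (entropy_add_entropy_le_maxCrossEnt hπ0 hπ1.le (hPX0 q.1) (hPX1 q.1) (hPY0 q.2) (hPY1 q.2))
    (EReal.coe_nonneg.2 (hQ.1 q))

/-- for every coupling `Q` of `(P_W, P_W)`,
`∑_{(w,w')} Q(w,w') 𝓗(P_{X|W=w}, P_{Y|W=w'} ‖ π)
  ≥ ∑_w P_W(w) H(P_{X|W=w}) + ∑_w P_W(w) H(P_{Y|W=w})`. -/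
theorem stmt_9 {W X Y : Type*} [Fintype W] [Fintype X] [Fintype Y]
    (π : X × Y → ℝ) (hπ0 : ∀ p, 0 ≤ π p) (hπ1 : ∑ p, π p = 1)
    (PW : W → ℝ) (hPW0 : ∀ w, 0 ≤ PW w) (hPW1 : ∑ w, PW w = 1)
    (PX : W → X → ℝ) (hPX0 : ∀ w x, 0 ≤ PX w x) (hPX1 : ∀ w, ∑ x, PX w x = 1)
    (PY : W → Y → ℝ) (hPY0 : ∀ w y, 0 ≤ PY w y) (hPY1 : ∀ w, ∑ y, PY w y = 1)
    (Q : W × W → ℝ) (hQ : IsCoupling PW PW Q) :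
    ((∑ w, PW w * entropy (PX w) + ∑ w, PW w * entropy (PY w) : ℝ) : EReal)
      ≤ ∑ q : W × W, (Q q : EReal) * maxCrossEnt (PX q.1) (PY q.2) π :=
  stmt_9_general π hπ0 hπ1 PW PX hPX0 hPX1 PY hPY0 hPY1 Q hQ
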